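/- Let R be a ring and N a natural number. Every semifree N-complex of R-modules is h-projective: if F admits an exhaustive filtration 0 = F_0 ⊆ F_1 ⊆ F_2 ⊆ ... with F = ∪_n F_n and each quotient F_i/F_{i−1} levelwise free with vanishing differential, then Hom_{K_N(Mod_R)}(F, T) = 0 for every acyclic N-complex T. -/

import Mathlib

universe u v

variable {R : Type u} [Ring R]

/-- Transport of a graded component along an equality of degrees. -/
def lcast {M : ℤ → Type v} [∀ i, AddCommGroup (M i)] [∀ i, Module R (M i)]
    {a b : ℤ} (h : a = b) : M a →ₗ[R] M b := by subst h; exact LinearMap.id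

/-- The `k`-fold iterate `d^k : M^i → M^(i+k)` of a degree-one map `d`. -/
def dIter (M : ℤ → Type v) [∀ i, AddCommGroup (M i)] [∀ i, Module R (M i)]
    (d : ∀ i : ℤ, M i →ₗ[R] M (i + 1)) : ∀ (k : ℕ) (i : ℤ), M i →ₗ[R] M (i + k)
  | 0, i => lcast (by simp)
  | k + 1, i =>
    (lcast (show i + 1 + (k : ℕ) = i + ((k : ℕ) + 1 : ℕ) by push_cast; ring)).comp
      ((dIter M d k (i + 1)).comp (d i))

/-- An `N`-complex of `R`-modules. -/
structure NCx (R : Type u) [Ring R] (N : ℕ) where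
  M : ℤ → Type v
  [acg : ∀ i, AddCommGroup (M i)]
  [mod : ∀ i, Module R (M i)]
  d : ∀ i : ℤ, M i →ₗ[R] M (i + 1)
  dN : ∀ i : ℤ, dIter M d N i = 0

attribute [instance] NCx.acg NCx.mod

/-- A morphism of `N`-complexes. -/
structure NCxHom {N : ℕ} (A B : NCx.{u, v} R N) where
  f : ∀ i : ℤ, A.M i →ₗ[R] B.M i
  comm : ∀ i : ℤ, (B.d i).comp (f i) = (f (i + 1)).comp (A.d i)

/-- A morphism `φ` of `N`-complexes is nullhomotopic if there is a family of maps
`s^j : A^j → B^(j-N+1)` with `φ^i = ∑_{j=0}^{N-1} d^(N-j-1) ∘ s^(i+j) ∘ d^j`;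
equivalently, `φ` is zero in the homotopy category `K_N(Mod_R)`. -/
def Nullhomotopic {N : ℕ} {A B : NCx.{u, v} R N} (φ : NCxHom A B) : Prop :=
  ∃ s : ∀ j : ℤ, A.M j →ₗ[R] B.M (j - N + 1),
    ∀ (i : ℤ) (x : A.M i),
      φ.f i x = ∑ j : Fin N,
        lcast (R := R) (M := B.M)
          (show i + ((j : ℕ) : ℤ) - (N : ℤ) + 1 + ((N - 1 - (j : ℕ) : ℕ) : ℤ) = i by
            have := j.isLt; omega)
          (dIter B.M B.d (N - 1 - (j : ℕ)) (i + ((j : ℕ) : ℤ) - (N : ℤ) + 1)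
            (s (i + ((j : ℕ) : ℤ)) (dIter A.M A.d (j : ℕ) i x)))

/-- An `N`-complex `T` is acyclic if `H_(r)^i(T) = ker(d^r)/im(d^(N-r)) = 0` for all
`i ∈ ℤ` and `1 ≤ r ≤ N-1`. -/
def Acyclic {N : ℕ} (T : NCx.{u, v} R N) : Prop :=
  ∀ r : ℕ, 1 ≤ r → r ≤ N - 1 → ∀ (i : ℤ) (x : T.M i),
    dIter T.M T.d r i x = 0 →
      ∃ y : T.M (i - ((N - r : ℕ) : ℤ)),
        lcast (R := R) (M := T.M) (by omega)
          (dIter T.M T.d (N - r) (i - ((N - r : ℕ) : ℤ)) y) = x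


section Lemmas

variable {M : ℤ → Type v} [∀ i, AddCommGroup (M i)] [∀ i, Module R (M i)]

@[simp] lemma lcast_refl {a : ℤ} (h : a = a) (x : M a) :
    lcast (R := R) (M := M) h x = x := rfl

lemma lcast_lcast {a b c : ℤ} (h1 : a = b) (h2 : b = c) (x : M a) :
    lcast (R := R) (M := M) h2 (lcast (R := R) (M := M) h1 x) =
      lcast (R := R) (M := M) (h1.trans h2) x := by subst h1; subst h2; rfl

variable {d : ∀ i : ℤ, M i →ₗ[R] M (i + 1)}

lemma d_lcast {a b : ℤ} (h : a = b) (h' : a + 1 = b + 1) (x : M a) :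
    d b (lcast (R := R) (M := M) h x) = lcast (R := R) (M := M) h' (d a x) := by
  subst h; rfl

lemma dIter_lcast (k : ℕ) {a b : ℤ} (h : a = b) (h' : a + k = b + k) (x : M a) :
    dIter M d k b (lcast (R := R) (M := M) h x)
      = lcast (R := R) (M := M) h' (dIter M d k a x) := by
  subst h; rfl

lemma lcast_inj {a b : ℤ} (h : a = b) {x y : M a}
    (hxy : lcast (R := R) (M := M) h x = lcast (R := R) (M := M) h y) : x = y := by
  subst h; exact hxy

lemma dIter_zero_apply (i : ℤ) (x : M i) :
    dIter M d 0 i x = lcast (R := R) (M := M) (by simp) x := rfl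

lemma dIter_succ_apply (k : ℕ) (i : ℤ) (x : M i) :
    dIter M d (k + 1) i x =
      lcast (R := R) (M := M) (by push_cast; ring) (dIter M d k (i + 1) (d i x)) := rfl

lemma dIter_succ' (k : ℕ) (i : ℤ) (x : M i) :
    dIter M d (k + 1) i x =
      lcast (R := R) (M := M) (by push_cast; ring) (d (i + k) (dIter M d k i x)) := by
  induction k generalizing i with
  | zero =>
      rw [dIter_succ_apply, dIter_zero_apply, dIter_zero_apply, d_lcast (h' := by simp),
        lcast_lcast, lcast_lcast]
  | succ k ih =>
      rw [dIter_succ_apply, ih, dIter_succ_apply k i x,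
        d_lcast (h' := by push_cast; ring), lcast_lcast, lcast_lcast]

end Lemmas

section Cx

variable {N : ℕ} {A B : NCx.{u, v} R N} (φ : NCxHom A B)

lemma f_lcast {a b : ℤ} (h : a = b) (x : A.M a) :
    φ.f b (lcast (R := R) (M := A.M) h x) = lcast (R := R) (M := B.M) h (φ.f a x) := by
  subst h; rfl

lemma f_d (i : ℤ) (x : A.M i) : B.d i (φ.f i x) = φ.f (i + 1) (A.d i x) :=
  congrFun (congrArg (fun g => g.toFun) (φ.comm i)) x

lemma f_dIter (k : ℕ) (i : ℤ) (x : A.M i) :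
    dIter B.M B.d k i (φ.f i x) = φ.f (i + k) (dIter A.M A.d k i x) := by
  induction k with
  | zero => rw [dIter_zero_apply, dIter_zero_apply, f_lcast]
  | succ k ih =>
      rw [dIter_succ' k i x, dIter_succ' k i (φ.f i x), ih, f_d, f_lcast]

lemma dIterN_zero (i : ℤ) (x : A.M i) : dIter A.M A.d N i x = 0 := by
  rw [A.dN]; rfl

end Cx

section Mem

variable {M : ℤ → Type v} [∀ i, AddCommGroup (M i)] [∀ i, Module R (M i)]
variable {d : ∀ i : ℤ, M i →ₗ[R] M (i + 1)}

lemma lcast_mem {P : ∀ i : ℤ, Submodule R (M i)} {a b : ℤ} (h : a = b) {x : M a}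
    (hx : x ∈ P a) : lcast (R := R) (M := M) h x ∈ P b := by subst h; exact hx

lemma dIter_mem {P : ∀ i : ℤ, Submodule R (M i)}
    (hcl : ∀ i, (P i).map (d i) ≤ P (i + 1)) (k : ℕ) (i : ℤ) {x : M i}
    (hx : x ∈ P i) : dIter M d k i x ∈ P (i + k) := by
  induction k with
  | zero => rw [dIter_zero_apply]; exact lcast_mem _ hx
  | succ k ih =>
      rw [dIter_succ' (d := d) k i x]
      exact lcast_mem _ (hcl _ ⟨_, ih, rfl⟩)

end Mem

section Acy

variable {N : ℕ} {T : NCx.{u, v} R N}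

lemma exists_anti (hT : Acyclic T) (hN : 1 ≤ N) (i : ℤ) (z : T.M i)
    (hz : T.d i z = 0) :
    ∃ y : T.M (i - ((N - 1 : ℕ) : ℤ)),
      lcast (R := R) (M := T.M) (by omega)
        (dIter T.M T.d (N - 1) (i - ((N - 1 : ℕ) : ℤ)) y) = z := by
  rcases N with _ | _ | n
  · omega
  · refine ⟨lcast (R := R) (M := T.M) (by simp) z, ?_⟩
    rw [dIter_zero_apply, lcast_lcast, lcast_lcast, lcast_refl]
  · have h1 : dIter T.M T.d 1 i z = 0 := by
      rw [dIter_succ_apply, dIter_zero_apply, hz, map_zero, map_zero]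
    exact hT 1 le_rfl (by omega) i z h1

end Acy

section Congr

variable {M : ℤ → Type v} [∀ i, AddCommGroup (M i)] [∀ i, Module R (M i)]
variable {d : ∀ i : ℤ, M i →ₗ[R] M (i + 1)}

lemma d_dIter (c : ℕ) (m : ℤ) (z : M m) :
    d (m + c) (dIter M d c m z) =
      lcast (R := R) (M := M) (by push_cast; ring) (dIter M d (c + 1) m z) := by
  rw [dIter_succ' c m z, lcast_lcast, lcast_refl]

lemma cast_dIter_congr {c1 c2 : ℕ} (h : c1 = c2) {m1 m2 i : ℤ} (hm : m1 = m2)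
    (p1 : m1 + c1 = i) (p2 : m2 + c2 = i) (z1 : M m1) (z2 : M m2)
    (hz : z2 = lcast (R := R) (M := M) hm z1) :
    lcast (R := R) (M := M) p1 (dIter M d c1 m1 z1)
      = lcast (R := R) (M := M) p2 (dIter M d c2 m2 z2) := by
  subst h; subst hm; subst hz; rfl

lemma dIter_exp_zero {k : ℕ} (hk : k = 0) (i : ℤ) (x : M i) (h : i = i + (k : ℤ)) :
    dIter M d k i x = lcast (R := R) (M := M) h x := by
  subst hk; rw [dIter_zero_apply]

lemma eq_lcast_symm {a b : ℤ} {h : a = b} {x : M a} {y : M b}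
    (hxy : y = lcast (R := R) (M := M) h x) :
    x = lcast (R := R) (M := M) h.symm y := by subst h; rw [hxy]; rfl

end Congr

section Term

variable {N : ℕ} {F T : NCx.{u, v} R N}
variable {P : ∀ i : ℤ, Submodule R (F.M i)}

lemma s_congr (s : ∀ j : ℤ, (P j) →ₗ[R] T.M (j - (N : ℤ) + 1)) {a b : ℤ} (h : a = b)
    {x1 : F.M a} {x2 : F.M b} (hx1 : x1 ∈ P a) (hx2 : x2 ∈ P b)
    (hx : x2 = lcast (R := R) (M := F.M) h x1) (h' : a - (N : ℤ) + 1 = b - (N : ℤ) + 1) :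
    s b ⟨x2, hx2⟩ = lcast (R := R) (M := T.M) h' (s a ⟨x1, hx1⟩) := by
  subst h; subst hx; rfl

/-- The `j`-th term of the nullhomotopy identity, as a linear map. -/
def TermL (Q : ∀ i : ℤ, Submodule R (F.M i))
    (s : ∀ j : ℤ, (P j) →ₗ[R] T.M (j - (N : ℤ) + 1)) (i : ℤ) (k : ℕ) (hk : k < N)
    (hmem : ∀ x : F.M i, x ∈ Q i → dIter F.M F.d k i x ∈ P (i + (k : ℕ))) :
    (Q i) →ₗ[R] T.M i :=
  (lcast (R := R) (M := T.M)
      (show i + ((k : ℕ) : ℤ) - (N : ℤ) + 1 + ((N - 1 - k : ℕ) : ℤ) = i by omega)).comp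
    ((dIter T.M T.d (N - 1 - k) (i + ((k : ℕ) : ℤ) - (N : ℤ) + 1)).comp
      ((s (i + (k : ℕ))).comp
        (LinearMap.codRestrict (P (i + (k : ℕ)))
          ((dIter F.M F.d k i).comp (Q i).subtype) (fun x => hmem x x.2))))

lemma TermL_apply (Q : ∀ i : ℤ, Submodule R (F.M i))
    (s : ∀ j : ℤ, (P j) →ₗ[R] T.M (j - (N : ℤ) + 1)) (i : ℤ) (k : ℕ) (hk : k < N)
    (hmem : ∀ x : F.M i, x ∈ Q i → dIter F.M F.d k i x ∈ P (i + (k : ℕ)))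
    (x : Q i) :
    TermL Q s i k hk hmem x =
      lcast (R := R) (M := T.M) (by omega)
        (dIter T.M T.d (N - 1 - k) (i + ((k : ℕ) : ℤ) - (N : ℤ) + 1)
          (s (i + (k : ℕ)) ⟨dIter F.M F.d k i (x : F.M i), hmem x x.2⟩)) := rfl

/-- `TermL` only depends on the underlying element. -/
lemma TermL_val (Q Q' : ∀ i : ℤ, Submodule R (F.M i))
    (s : ∀ j : ℤ, (P j) →ₗ[R] T.M (j - (N : ℤ) + 1)) (i : ℤ) (k : ℕ) (hk : k < N)
    (hmem : ∀ x : F.M i, x ∈ Q i → dIter F.M F.d k i x ∈ P (i + (k : ℕ)))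
    (hmem' : ∀ x : F.M i, x ∈ Q' i → dIter F.M F.d k i x ∈ P (i + (k : ℕ)))
    (x : F.M i) (hx : x ∈ Q i) (hx' : x ∈ Q' i) :
    TermL Q s i k hk hmem ⟨x, hx⟩ = TermL Q' s i k hk hmem' ⟨x, hx'⟩ := rfl

/-- The nullhomotopy identity for a homotopy defined on a subcomplex `Q`. -/
def Ident (φ : NCxHom F T) (Q : ∀ i : ℤ, Submodule R (F.M i))
    (hcl : ∀ i, (Q i).map (F.d i) ≤ Q (i + 1))
    (s : ∀ j : ℤ, (Q j) →ₗ[R] T.M (j - (N : ℤ) + 1)) : Prop :=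
  ∀ (i : ℤ) (x : F.M i) (hx : x ∈ Q i),
    φ.f i x = ∑ j : Fin N,
      TermL Q s i (j : ℕ) j.isLt
        (fun y hy => dIter_mem hcl (j : ℕ) i hy) ⟨x, hx⟩

end Term

section Extend

variable {N : ℕ} {F T : NCx.{u, v} R N} (φ : NCxHom F T)
variable (P Q : ∀ i : ℤ, Submodule R (F.M i))

lemma dIter_mem_QP (hclP : ∀ i, (P i).map (F.d i) ≤ P (i + 1))
    (hdQP : ∀ i, (Q i).map (F.d i) ≤ P (i + 1)) (k : ℕ) (i : ℤ) (x : F.M i)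
    (hx : x ∈ Q i) : dIter F.M F.d (k + 1) i x ∈ P (i + ((k + 1 : ℕ) : ℤ)) := by
  rw [dIter_succ_apply]
  exact lcast_mem _ (dIter_mem hclP k (i + 1) (hdQP i ⟨x, hx, rfl⟩))

/-- The "defect" map `ψ^i = φ^i − ∑_{k=1}^{N-1} d^{N-1-k} s^{i+k} d^k` on `Q i`. -/
def psiMap (hclP : ∀ i, (P i).map (F.d i) ≤ P (i + 1))
    (hdQP : ∀ i, (Q i).map (F.d i) ≤ P (i + 1))
    (s : ∀ j : ℤ, (P j) →ₗ[R] T.M (j - (N : ℤ) + 1)) (i : ℤ) : (Q i) →ₗ[R] T.M i :=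
  (φ.f i).comp (Q i).subtype -
    ∑ j : Fin (N - 1),
      TermL Q s i ((j : ℕ) + 1) (by have := j.isLt; omega)
        (fun x hx => dIter_mem_QP P Q hclP hdQP (j : ℕ) i x hx)

variable (hclP : ∀ i, (P i).map (F.d i) ≤ P (i + 1))
variable (hdQP : ∀ i, (Q i).map (F.d i) ≤ P (i + 1))
variable (s : ∀ j : ℤ, (P j) →ₗ[R] T.M (j - (N : ℤ) + 1))

lemma psiMap_apply (i : ℤ) (x : Q i) :
    psiMap φ P Q hclP hdQP s i x = φ.f i (x : F.M i) -
      ∑ j : Fin (N - 1),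
        TermL Q s i ((j : ℕ) + 1) (by have := j.isLt; omega)
          (fun y hy => dIter_mem_QP P Q hclP hdQP (j : ℕ) i y hy) x := by
  simp [psiMap]

lemma term_d_step (i : ℤ) (x : Q i) (hdx : F.d i (x : F.M i) ∈ P (i + 1)) (k : ℕ)
    (hk : k < N) (hk' : k + 1 < N)
    (hmem : ∀ y : F.M (i + 1), y ∈ P (i + 1) →
      dIter F.M F.d k (i + 1) y ∈ P ((i + 1) + ((k : ℕ) : ℤ)))
    (hmem' : ∀ y : F.M i, y ∈ Q i →
      dIter F.M F.d (k + 1) i y ∈ P (i + ((k + 1 : ℕ) : ℤ))) :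
    TermL P s (i + 1) k hk hmem ⟨F.d i (x : F.M i), hdx⟩
      = T.d i (TermL Q s i (k + 1) hk' hmem' x) := by
  rw [TermL_apply, TermL_apply, d_lcast (h' := by omega), d_dIter, lcast_lcast]
  have hw2 := s_congr (T := T) s
    (show (i + 1) + ((k : ℕ) : ℤ) = i + ((k + 1 : ℕ) : ℤ) by push_cast; ring)
    (hmem (F.d i (x : F.M i)) hdx) (hmem' (x : F.M i) x.2)
    (dIter_succ_apply k i (x : F.M i))
    (show (i + 1) + ((k : ℕ) : ℤ) - (N : ℤ) + 1 = (i + ((k + 1 : ℕ) : ℤ)) - (N : ℤ) + 1 by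
      push_cast; ring)
  exact (cast_dIter_congr (by omega) _ _ _ _ _ (eq_lcast_symm hw2)).symm

lemma term_last (i : ℤ) (x : Q i) (hdx : F.d i (x : F.M i) ∈ P (i + 1)) (k : ℕ)
    (hk : k < N) (hkN : k + 1 = N)
    (hmem : ∀ y : F.M (i + 1), y ∈ P (i + 1) →
      dIter F.M F.d k (i + 1) y ∈ P ((i + 1) + ((k : ℕ) : ℤ))) :
    TermL P s (i + 1) k hk hmem ⟨F.d i (x : F.M i), hdx⟩ = 0 := by
  rw [TermL_apply]
  have h0 : dIter F.M F.d k (i + 1) (F.d i (x : F.M i)) = 0 := by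
    have h1 : dIter F.M F.d (k + 1) i (x : F.M i) = 0 := by
      rw [hkN]; exact dIterN_zero i _
    rw [dIter_succ_apply] at h1
    exact lcast_inj _ (by rw [h1, map_zero])
  have : (⟨dIter F.M F.d k (i + 1) (F.d i (x : F.M i)),
      hmem (F.d i (x : F.M i)) hdx⟩ : P ((i + 1) + ((k : ℕ) : ℤ))) = 0 := by
    exact Subtype.ext h0
  rw [this, map_zero, map_zero, map_zero]

lemma star_on_P (hN : 1 ≤ N) (hs : Ident φ P hclP s) (i : ℤ) (x : F.M i)
    (hxP : x ∈ P i) (hxQ : x ∈ Q i) :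
    lcast (R := R) (M := T.M) (show i - (N : ℤ) + 1 + ((N - 1 : ℕ) : ℤ) = i by omega)
      (dIter T.M T.d (N - 1) (i - (N : ℤ) + 1) (s i ⟨x, hxP⟩))
      = psiMap φ P Q hclP hdQP s i ⟨x, hxQ⟩ := by
  obtain ⟨n, rfl⟩ : ∃ n, N = n + 1 := ⟨N - 1, by omega⟩
  rw [psiMap_apply, hs i x hxP, Fin.sum_univ_succ, eq_sub_iff_add_eq]
  refine congrArg₂ (· + ·) ?_ ?_
  · refine cast_dIter_congr (by simp only [Fin.val_zero]; omega)
      (show i - ((n + 1 : ℕ) : ℤ) + 1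
          = i + (((0 : Fin (n + 1)) : ℕ) : ℤ) - ((n + 1 : ℕ) : ℤ) + 1 by
        simp only [Fin.val_zero]; push_cast; ring) _ _ _ _
      (s_congr s (show i = i + (((0 : Fin (n + 1)) : ℕ) : ℤ) by
          simp only [Fin.val_zero]; push_cast; ring) hxP _
        (dIter_exp_zero (Fin.val_zero _) i x _) _)
  · exact Finset.sum_congr rfl fun j _ => TermL_val Q P s i ((j : ℕ) + 1)
      (by have := j.isLt; omega) _ _ x hxQ hxP

lemma d_psi (hN : 1 ≤ N) (hs : Ident φ P hclP s) (i : ℤ) (x : Q i) :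
    T.d i (psiMap φ P Q hclP hdQP s i x) = 0 := by
  obtain ⟨n, rfl⟩ : ∃ n, N = n + 1 := ⟨N - 1, by omega⟩
  have hdx : F.d i (x : F.M i) ∈ P (i + 1) := hdQP i ⟨(x : F.M i), x.2, rfl⟩
  rw [psiMap_apply, map_sub, map_sum, f_d, hs (i + 1) (F.d i (x : F.M i)) hdx,
    Fin.sum_univ_castSucc, sub_eq_zero]
  refine Eq.trans (congrArg₂ (· + ·) rfl
    (term_last P Q s i x hdx n (by omega) rfl _)) ?_
  refine Eq.trans (add_zero _) ?_
  exact Finset.sum_congr rfl fun j _ => term_d_step P Q s i x hdx (j : ℕ)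
    (by have := j.isLt; omega) (by have := j.isLt; omega) _ _

lemma exists_step (hT : Acyclic T) (hN : 1 ≤ N)
    (hfree : ∀ i, Module.Free R (↥(Q i) ⧸ ((P i).comap (Q i).subtype)))
    (hs : Ident φ P hclP s) (i : ℤ) :
    ∃ s'i : (Q i) →ₗ[R] T.M (i - (N : ℤ) + 1),
      (∀ (x : F.M i) (hxP : x ∈ P i) (hxQ : x ∈ Q i), s'i ⟨x, hxQ⟩ = s i ⟨x, hxP⟩) ∧
      (∀ x : Q i,
        lcast (R := R) (M := T.M) (show i - (N : ℤ) + 1 + ((N - 1 : ℕ) : ℤ) = i by omega)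
          (dIter T.M T.d (N - 1) (i - (N : ℤ) + 1) (s'i x))
          = psiMap φ P Q hclP hdQP s i x) := by
  classical
  set K := (P i).comap (Q i).subtype with hK
  haveI := hfree i
  obtain ⟨sec, hsec⟩ := Module.projective_lifting_property K.mkQ
    (LinearMap.id : (↥(Q i) ⧸ K) →ₗ[R] (↥(Q i) ⧸ K)) (Submodule.mkQ_surjective K)
  have hsec' : ∀ q, K.mkQ (sec q) = q := fun q => DFunLike.congr_fun hsec q
  have hret : ∀ x : Q i, ((x : F.M i) - ((sec (K.mkQ x) : Q i) : F.M i)) ∈ P i := by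
    intro x
    have h0 : K.mkQ (x - sec (K.mkQ x)) = 0 := by
      rw [map_sub, hsec', sub_self]
    have hmem : (x - sec (K.mkQ x)) ∈ LinearMap.ker K.mkQ := LinearMap.mem_ker.mpr h0
    rw [Submodule.ker_mkQ] at hmem
    simpa [hK, Submodule.mem_comap] using hmem
  let retr : (Q i) →ₗ[R] (P i) := LinearMap.codRestrict (P i)
    ((Q i).subtype - ((Q i).subtype.comp (sec.comp K.mkQ))) (fun x => hret x)
  choose y hy using fun q : ↥(Q i) ⧸ K =>
    exists_anti hT hN i _ (d_psi φ P Q hclP hdQP s hN hs i (sec q))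
  let b := Module.Free.chooseBasis R (↥(Q i) ⧸ K)
  let t : (↥(Q i) ⧸ K) →ₗ[R] T.M (i - (N : ℤ) + 1) :=
    Module.Basis.constr b ℕ fun v => lcast (R := R) (M := T.M) (by omega) (y (b v))
  have ht : ∀ q : ↥(Q i) ⧸ K,
      lcast (R := R) (M := T.M) (show i - (N : ℤ) + 1 + ((N - 1 : ℕ) : ℤ) = i by omega)
        (dIter T.M T.d (N - 1) (i - (N : ℤ) + 1) (t q))
        = psiMap φ P Q hclP hdQP s i (sec q) := by
    intro q
    have hext : ((lcast (R := R) (M := T.M)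
          (show i - (N : ℤ) + 1 + ((N - 1 : ℕ) : ℤ) = i by omega)).comp
        ((dIter T.M T.d (N - 1) (i - (N : ℤ) + 1)).comp t))
        = (psiMap φ P Q hclP hdQP s i).comp sec := by
      refine Module.Basis.ext b fun v => ?_
      show lcast (R := R) (M := T.M) _
          (dIter T.M T.d (N - 1) (i - (N : ℤ) + 1) (t (b v)))
          = psiMap φ P Q hclP hdQP s i (sec (b v))
      have htb : t (b v) = lcast (R := R) (M := T.M) (by omega) (y (b v)) :=
      Module.Basis.constr_basis b ℕ _ v
      rw [htb, dIter_lcast (h' := by omega), lcast_lcast]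
      exact hy (b v)
    exact DFunLike.congr_fun hext q
  refine ⟨(s i).comp retr + t.comp K.mkQ, ?_, ?_⟩
  · intro x hxP hxQ
    have hmk : K.mkQ ⟨x, hxQ⟩ = 0 := by
      rw [Submodule.mkQ_apply, Submodule.Quotient.mk_eq_zero]
      exact hxP
    have hretr : retr ⟨x, hxQ⟩ = ⟨x, hxP⟩ := by
      apply Subtype.ext
      show x - ((sec (K.mkQ ⟨x, hxQ⟩) : Q i) : F.M i) = x
      rw [hmk, map_zero]
      simp
    rw [LinearMap.add_apply, LinearMap.comp_apply, LinearMap.comp_apply, hmk, map_zero,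
      add_zero, hretr]
  · intro x
    rw [LinearMap.add_apply, map_add, map_add]
    have hretr : retr x = ⟨(x : F.M i) - ((sec (K.mkQ x) : Q i) : F.M i), hret x⟩ := rfl
    have h1 := star_on_P φ P Q hclP hdQP s hN hs i
      ((x : F.M i) - ((sec (K.mkQ x) : Q i) : F.M i)) (hret x)
      (sub_mem x.2 (sec (K.mkQ x)).2)
    rw [LinearMap.comp_apply, LinearMap.comp_apply, hretr, h1, ht (K.mkQ x), ← map_add]
    congr 1
    apply Subtype.ext
    show ((x : F.M i) - ((sec (K.mkQ x) : Q i) : F.M i)) + ((sec (K.mkQ x) : Q i) : F.M i)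
      = (x : F.M i)
    exact sub_add_cancel _ _

lemma ident_zero (hbot : ∀ i, Q i = ⊥)
    (hclQ : ∀ i, (Q i).map (F.d i) ≤ Q (i + 1)) :
    Ident φ Q hclQ (fun _ => 0) := by
  intro i x hx
  have hx0 : x = 0 := by
    have := hx; rw [hbot i] at this; exact (Submodule.mem_bot R).mp this
  subst hx0
  have hz : (⟨(0 : F.M i), hx⟩ : Q i) = 0 := Subtype.ext rfl
  rw [hz]
  simp only [map_zero, Finset.sum_const_zero]

lemma extend (hT : Acyclic T) (hN : 1 ≤ N)
    (hdQP : ∀ i, (Q i).map (F.d i) ≤ P (i + 1))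
    (hclQ : ∀ i, (Q i).map (F.d i) ≤ Q (i + 1))
    (hfree : ∀ i, Module.Free R (↥(Q i) ⧸ ((P i).comap (Q i).subtype)))
    (hs : Ident φ P hclP s) :
    ∃ s' : ∀ j : ℤ, (Q j) →ₗ[R] T.M (j - (N : ℤ) + 1),
      (∀ (j : ℤ) (x : F.M j) (hxP : x ∈ P j) (hxQ : x ∈ Q j),
        s' j ⟨x, hxQ⟩ = s j ⟨x, hxP⟩) ∧ Ident φ Q hclQ s' := by
  choose s' hrestr hstar using fun j => exists_step φ P Q hclP hdQP s hT hN hfree hs j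
  refine ⟨s', fun j x hxP hxQ => hrestr j x hxP hxQ, ?_⟩
  intro i x hx
  obtain ⟨n, rfl⟩ : ∃ n, N = n + 1 := ⟨N - 1, by omega⟩
  rw [Fin.sum_univ_succ]
  have h3 : i = i + (((0 : Fin (n + 1)) : ℕ) : ℤ) := by
    simp only [Fin.val_zero]; push_cast; ring
  have hm : i - ((n + 1 : ℕ) : ℤ) + 1
      = i + (((0 : Fin (n + 1)) : ℕ) : ℤ) - ((n + 1 : ℕ) : ℤ) + 1 := by
    simp only [Fin.val_zero]; push_cast; ring
  have h0 : TermL Q s' i ((0 : Fin (n + 1)) : ℕ) (0 : Fin (n + 1)).isLt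
      (fun y hy => dIter_mem hclQ ((0 : Fin (n + 1)) : ℕ) i hy) ⟨x, hx⟩
      = psiMap φ P Q hclP hdQP s i ⟨x, hx⟩ :=
    (cast_dIter_congr
      (show n + 1 - 1 = n + 1 - 1 - ((0 : Fin (n + 1)) : ℕ) by
        simp only [Fin.val_zero]; omega) hm _ _ _ _
      (s_congr (P := Q) s' h3 hx _ (dIter_exp_zero (Fin.val_zero (n + 1)) i x h3) hm)).symm.trans
      (hstar i ⟨x, hx⟩)
  have hterm : ∀ j : Fin n,
      TermL Q s i ((j : ℕ) + 1) (by have := j.isLt; omega)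
        (fun y hy => dIter_mem_QP P Q hclP hdQP (j : ℕ) i y hy) ⟨x, hx⟩
      = TermL Q s' i ((Fin.succ j : Fin (n + 1)) : ℕ) (Fin.succ j).isLt
        (fun y hy => dIter_mem hclQ ((Fin.succ j : Fin (n + 1)) : ℕ) i hy) ⟨x, hx⟩ := by
    intro j
    exact cast_dIter_congr rfl rfl _ _ _ _
      ((hrestr _ _ (dIter_mem_QP P Q hclP hdQP (j : ℕ) i x hx)
        (dIter_mem hclQ _ i hx)).trans (lcast_refl _ _).symm)
  refine Eq.trans ?_ (congrArg₂ (· + ·) h0.symm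
    (Finset.sum_congr rfl fun j _ => hterm j))
  rw [psiMap_apply]
  exact (sub_add_cancel _ _).symm

end Extend

section Glue

variable {N : ℕ} {F T : NCx.{u, v} R N} (φ : NCxHom F T)
variable (S : ℕ → ∀ i : ℤ, Submodule R (F.M i))

lemma hclS (hS0 : ∀ i, S 0 i = ⊥) (hmono : ∀ n i, S n i ≤ S (n + 1) i)
    (hd : ∀ n i, (S (n + 1) i).map (F.d i) ≤ S n (i + 1)) (n : ℕ) (i : ℤ) :
    (S n i).map (F.d i) ≤ S n (i + 1) := by
  cases n with
  | zero => rw [hS0 i]; simp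
  | succ n => exact (hd n i).trans (hmono n (i + 1))

noncomputable def sigmaFam (hT : Acyclic T) (hN : 1 ≤ N)
    (hS0 : ∀ i, S 0 i = ⊥) (hmono : ∀ n i, S n i ≤ S (n + 1) i)
    (hd : ∀ n i, (S (n + 1) i).map (F.d i) ≤ S n (i + 1))
    (hfree : ∀ n i,
      Module.Free R (↥(S (n + 1) i) ⧸ ((S n i).comap (S (n + 1) i).subtype))) :
    ∀ n : ℕ, {s : ∀ j : ℤ, (S n j) →ₗ[R] T.M (j - (N : ℤ) + 1) //
      Ident φ (S n) (hclS S hS0 hmono hd n) s}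
  | 0 => ⟨fun _ => 0, ident_zero φ (S 0) hS0 (hclS S hS0 hmono hd 0)⟩
  | n + 1 =>
    ⟨Classical.choose (extend φ (S n) (S (n + 1)) (hclS S hS0 hmono hd n)
        (sigmaFam hT hN hS0 hmono hd hfree n).1 hT hN (hd n)
        (hclS S hS0 hmono hd (n + 1)) (hfree n)
        (sigmaFam hT hN hS0 hmono hd hfree n).2),
      (Classical.choose_spec (extend φ (S n) (S (n + 1)) (hclS S hS0 hmono hd n)
        (sigmaFam hT hN hS0 hmono hd hfree n).1 hT hN (hd n)
        (hclS S hS0 hmono hd (n + 1)) (hfree n)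
        (sigmaFam hT hN hS0 hmono hd hfree n).2)).2⟩

lemma sigma_compat (hT : Acyclic T) (hN : 1 ≤ N)
    (hS0 : ∀ i, S 0 i = ⊥) (hmono : ∀ n i, S n i ≤ S (n + 1) i)
    (hd : ∀ n i, (S (n + 1) i).map (F.d i) ≤ S n (i + 1))
    (hfree : ∀ n i,
      Module.Free R (↥(S (n + 1) i) ⧸ ((S n i).comap (S (n + 1) i).subtype)))
    (n : ℕ) (j : ℤ) (x : F.M j) (hxP : x ∈ S n j) (hxQ : x ∈ S (n + 1) j) :
    (sigmaFam φ S hT hN hS0 hmono hd hfree (n + 1)).1 j ⟨x, hxQ⟩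
      = (sigmaFam φ S hT hN hS0 hmono hd hfree n).1 j ⟨x, hxP⟩ :=
  (Classical.choose_spec (extend φ (S n) (S (n + 1)) (hclS S hS0 hmono hd n)
    (sigmaFam φ S hT hN hS0 hmono hd hfree n).1 hT hN (hd n)
    (hclS S hS0 hmono hd (n + 1)) (hfree n)
    (sigmaFam φ S hT hN hS0 hmono hd hfree n).2)).1 j x hxP hxQ

end Glue
/-- Every semifree `N`-complex of `R`-modules is h-projective: if `F` carries an
exhaustive filtration `0 = F₀ ⊆ F₁ ⊆ F₂ ⊆ ...` of subcomplexes with `F = ⋃ₙ Fₙ` such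
that each quotient `Fₙ₊₁/Fₙ` is levelwise free with vanishing differential, then every
morphism of `N`-complexes from `F` to an acyclic `N`-complex `T` is nullhomotopic,
i.e. `Hom_{K_N(Mod_R)}(F, T) = 0`. -/
theorem semifree_is_h_projective (R : Type u) [Ring R] (N : ℕ) (F : NCx.{u, v} R N)
    (S : ℕ → ∀ i : ℤ, Submodule R (F.M i))
    (hS0 : ∀ i, S 0 i = ⊥)
    (hmono : ∀ n i, S n i ≤ S (n + 1) i)
    (hexh : ∀ i, ⨆ n, S n i = ⊤)
    (hd : ∀ n i, (S (n + 1) i).map (F.d i) ≤ S n (i + 1))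
    (hfree : ∀ n i,
      Module.Free R (↥(S (n + 1) i) ⧸ ((S n i).comap (S (n + 1) i).subtype)))
    (T : NCx.{u, v} R N) (hT : Acyclic T) (φ : NCxHom F T) :
    Nullhomotopic φ := by
  rcases Nat.eq_zero_or_pos N with hN0 | hN
  · subst hN0
    refine ⟨fun _ => 0, fun i x => ?_⟩
    have hx0 : x = 0 := by
      have h0 : dIter F.M F.d 0 i x = 0 := by rw [F.dN i]; rfl
      rw [dIter_zero_apply] at h0
      exact lcast_inj _ (by rw [h0, map_zero])
    subst hx0
    simp
  · classical
    let Fam := sigmaFam φ S hT hN hS0 hmono hd hfree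
    have hSm : ∀ j : ℤ, Monotone (fun n => S n j) :=
      fun j => monotone_nat_of_le_succ (fun n => hmono n j)
    have hub : ∀ a b : ℕ, a ≤ b → ∀ (j : ℤ) (x : F.M j) (hxa : x ∈ S a j)
        (hxb : x ∈ S b j), (Fam b).1 j ⟨x, hxb⟩ = (Fam a).1 j ⟨x, hxa⟩ := by
      intro a b hab
      induction b, hab using Nat.le_induction with
      | base => intro j x hxa hxb; rfl
      | succ b hab ih =>
          intro j x hxa hxb
          have hxb0 : x ∈ S b j := hSm j hab hxa
          exact (sigma_compat φ S hT hN hS0 hmono hd hfree b j x hxb0 hxb).trans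
            (ih j x hxa hxb0)
    have hex : ∀ (j : ℤ) (x : F.M j), ∃ n, x ∈ S n j := by
      intro j x
      have hx : x ∈ ⨆ n, S n j := by rw [hexh j]; exact Submodule.mem_top
      exact (Submodule.mem_iSup_of_directed _ ((hSm j).directed_le)).mp hx
    let pick : ∀ (j : ℤ), F.M j → ℕ := fun j x => Classical.choose (hex j x)
    have hpick : ∀ (j : ℤ) (x : F.M j), x ∈ S (pick j x) j :=
      fun j x => Classical.choose_spec (hex j x)
    have valeq : ∀ (j : ℤ) (x : F.M j) (n : ℕ) (hx : x ∈ S n j),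
        (Fam (pick j x)).1 j ⟨x, hpick j x⟩ = (Fam n).1 j ⟨x, hx⟩ := by
      intro j x n hx
      rcases le_total (pick j x) n with h | h
      · exact (hub (pick j x) n h j x (hpick j x) (hSm j h (hpick j x))).symm
      · exact hub n (pick j x) h j x hx (hpick j x)
    let stot : ∀ j : ℤ, F.M j →ₗ[R] T.M (j - (N : ℤ) + 1) := fun j =>
      { toFun := fun x => (Fam (pick j x)).1 j ⟨x, hpick j x⟩
        map_add' := by
          intro x y
          have h1 : pick j x ≤ max (pick j x) (max (pick j y) (pick j (x + y))) :=
            le_max_left _ _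
          have h2 : pick j y ≤ max (pick j x) (max (pick j y) (pick j (x + y))) :=
            le_trans (le_max_left _ _) (le_max_right _ _)
          have h3 : pick j (x + y) ≤ max (pick j x) (max (pick j y) (pick j (x + y))) :=
            le_trans (le_max_right _ _) (le_max_right _ _)
          have hxm : x ∈ S (max (pick j x) (max (pick j y) (pick j (x + y)))) j :=
            hSm j h1 (hpick j x)
          have hym : y ∈ S (max (pick j x) (max (pick j y) (pick j (x + y)))) j :=
            hSm j h2 (hpick j y)
          have hxym : x + y ∈ S (max (pick j x) (max (pick j y) (pick j (x + y)))) j :=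
            hSm j h3 (hpick j (x + y))
          show (Fam (pick j (x + y))).1 j ⟨x + y, hpick j (x + y)⟩
            = (Fam (pick j x)).1 j ⟨x, hpick j x⟩ + (Fam (pick j y)).1 j ⟨y, hpick j y⟩
          rw [valeq j (x + y) _ hxym, valeq j x _ hxm, valeq j y _ hym]
          have hsplit : (⟨x + y, hxym⟩ :
              S (max (pick j x) (max (pick j y) (pick j (x + y)))) j)
              = ⟨x, hxm⟩ + ⟨y, hym⟩ := rfl
          rw [hsplit, map_add]
        map_smul' := by
          intro r x
          have h1 : pick j x ≤ max (pick j x) (pick j (r • x)) := le_max_left _ _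
          have h2 : pick j (r • x) ≤ max (pick j x) (pick j (r • x)) := le_max_right _ _
          have hxm : x ∈ S (max (pick j x) (pick j (r • x))) j := hSm j h1 (hpick j x)
          have hrxm : r • x ∈ S (max (pick j x) (pick j (r • x))) j :=
            hSm j h2 (hpick j (r • x))
          show (Fam (pick j (r • x))).1 j ⟨r • x, hpick j (r • x)⟩
            = (RingHom.id R) r • (Fam (pick j x)).1 j ⟨x, hpick j x⟩
          rw [valeq j (r • x) _ hrxm, valeq j x _ hxm]
          have hsplit : (⟨r • x, hrxm⟩ : S (max (pick j x) (pick j (r • x))) j)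
              = r • ⟨x, hxm⟩ := rfl
          rw [hsplit, map_smul]
          rfl }
    refine ⟨stot, fun i x => ?_⟩
    obtain ⟨n0, hx⟩ := hex i x
    rw [(Fam n0).2 i x hx]
    refine Finset.sum_congr rfl fun j _ => ?_
    exact cast_dIter_congr rfl rfl _ _ _ _
      ((valeq (i + ((j : ℕ) : ℤ)) (dIter F.M F.d (j : ℕ) i x) n0
        (dIter_mem (hclS S hS0 hmono hd n0) (j : ℕ) i hx)).trans (lcast_refl _ _).symm)
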